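/- For every integer n ≥ 3, the distinguishing threshold of the cycle on n vertices equals ⌊n/2⌋ + 2, i.e., θ(C_n) = ⌊n/2⌋ + 2. -/

import Mathlib

open SimpleGraph

def IsDistinguishing {V : Type*} {k : ℕ} (G : SimpleGraph V) (c : V → Fin k) : Prop :=
  ∀ α : G ≃g G, (∀ v, c (α v) = c v) → ∀ v, α v = v

noncomputable def Phi {V : Type*} (G : SimpleGraph V) (k : ℕ) : ℕ :=
  Nat.card (Quot (fun c₁ c₂ : {c : V → Fin k // IsDistinguishing G c} =>
    ∃ α : G ≃g G, ∀ v, c₁.1 v = c₂.1 (α v)))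

noncomputable def phi {V : Type*} (G : SimpleGraph V) (k : ℕ) : ℕ :=
  Nat.card (Quot (fun c₁ c₂ : {c : V → Fin k // IsDistinguishing G c ∧ Function.Surjective c} =>
    ∃ α : G ≃g G, ∀ v, c₁.1 v = c₂.1 (α v)))

noncomputable def theta {V : Type*} (G : SimpleGraph V) : ℕ :=
  sInf {t | ∀ k, t ≤ k → ∀ c : V → Fin k, Function.Surjective c → IsDistinguishing G c}

def stirling2 : ℕ → ℕ → ℕ
  | 0, 0 => 1
  | 0, _ + 1 => 0
  | _ + 1, 0 => 0
  | n + 1, k + 1 => (k + 1) * stirling2 n (k + 1) + stirling2 n k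

def IsDCPartition {V : Type*} [DecidableEq V] [Fintype V] (G : SimpleGraph V)
    (P : Finpartition (Finset.univ : Finset V)) : Prop :=
  ∀ α : G ≃g G, (∀ p ∈ P.parts, p.image ⇑α = p) → ∀ v, α v = v

def IsDPartition {V : Type*} [DecidableEq V] [Fintype V] (G : SimpleGraph V)
    (P : Finpartition (Finset.univ : Finset V)) : Prop :=
  ∀ α : G ≃g G, P.parts.image (fun p => p.image ⇑α) = P.parts → ∀ v, α v = v

def PartEquiv {V : Type*} [DecidableEq V] [Fintype V] (G : SimpleGraph V)
    (P₁ P₂ : Finpartition (Finset.univ : Finset V)) : Prop :=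
  ∃ α : G ≃g G, P₁.parts.image (fun p => p.image ⇑α) = P₂.parts

noncomputable def psi {V : Type*} [DecidableEq V] [Fintype V] (G : SimpleGraph V) (k : ℕ) : ℕ :=
  Nat.card (Quot (fun P₁ P₂ : {P : Finpartition (Finset.univ : Finset V) //
      IsDCPartition G P ∧ P.parts.card = k} => PartEquiv G P₁.1 P₂.1))

noncomputable def PsiAtMost {V : Type*} [DecidableEq V] [Fintype V] (G : SimpleGraph V) (k : ℕ) : ℕ :=
  Nat.card (Quot (fun P₁ P₂ : {P : Finpartition (Finset.univ : Finset V) //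
      IsDCPartition G P ∧ P.parts.card ≤ k} => PartEquiv G P₁.1 P₂.1))

noncomputable def PiAtMost {V : Type*} [DecidableEq V] [Fintype V] (G : SimpleGraph V) (k : ℕ) : ℕ :=
  Nat.card (Quot (fun P₁ P₂ : {P : Finpartition (Finset.univ : Finset V) //
      P.parts.card ≤ k} => PartEquiv G P₁.1 P₂.1))

noncomputable def XiAtMost {V : Type*} [DecidableEq V] [Fintype V] (G : SimpleGraph V) (k : ℕ) : ℕ :=
  Nat.card (Quot (fun P₁ P₂ : {P : Finpartition (Finset.univ : Finset V) //
      IsDPartition G P ∧ P.parts.card ≤ k} => PartEquiv G P₁.1 P₂.1))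

def kneserGraph2 (n : ℕ) : SimpleGraph {s : Finset (Fin n) // s.card = 2} where
  Adj a b := Disjoint a.1 b.1
  symm := ⟨fun a b h => h.symm⟩
  loopless := by
    constructor
    rintro ⟨s, hs⟩ h
    simp only [disjoint_self, Finset.bot_eq_empty] at h
    simp [h] at hs

def lexProd {V W : Type*} (X : SimpleGraph V) (Y : SimpleGraph W) : SimpleGraph (V × W) where
  Adj a b := X.Adj a.1 b.1 ∨ (a.1 = b.1 ∧ Y.Adj a.2 b.2)
  symm := by
    constructor
    rintro ⟨x, y⟩ ⟨x', y'⟩ (h | ⟨h, h'⟩)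
    · exact Or.inl h.symm
    · exact Or.inr ⟨h.symm, h'.symm⟩
  loopless := by
    constructor
    rintro ⟨x, y⟩ (h | ⟨-, h⟩)
    · exact X.loopless.irrefl x h
    · exact Y.loopless.irrefl y h

def IsNaturalAut {V W : Type*} (X : SimpleGraph V) (Y : SimpleGraph W)
    (μ : lexProd X Y ≃g lexProd X Y) : Prop :=
  ∀ x : V, ∃ x' : V, (fun p => μ p) '' ({x} ×ˢ (Set.univ : Set W)) = {x'} ×ˢ (Set.univ : Set W)

noncomputable def distNumber {V : Type*} (G : SimpleGraph V) : ℕ :=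
  sInf {k | ∃ c : V → Fin k, IsDistinguishing G c}


section AuxThetaCycle

open scoped Fin.CommRing Fin.NatCast

variable {n : ℕ}

private lemma cg_adj [NeZero n] (hn : 3 ≤ n) {u v : Fin n} :
    (cycleGraph n).Adj u v ↔ u = v + 1 ∨ v = u + 1 := by
  rw [cycleGraph_adj']
  have h1v : (1 : Fin n).val = 1 := by rw [Fin.val_one']; exact Nat.mod_eq_of_lt (by omega)
  have key : ∀ a b : Fin n, (a - b).val = 1 ↔ a = b + 1 := by
    intro a b
    rw [show ((a - b).val = 1) ↔ a - b = 1 from by rw [Fin.ext_iff, h1v],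
      sub_eq_iff_eq_add, add_comm]
  rw [key, key]

private lemma aut_affine [NeZero n] (hn : 3 ≤ n) (α : cycleGraph n ≃g cycleGraph n) :
    ∃ e : Fin n, (e = 1 ∨ e = -1) ∧ ∀ i : Fin n, α i = α 0 + i * e := by
  have two_ne : ((2:ℕ) : Fin n) ≠ 0 := by
    intro hc
    have := congrArg Fin.val hc
    rw [Fin.val_natCast, Fin.val_zero, Nat.mod_eq_of_lt (by omega)] at this
    omega
  have step : ∀ e : Fin n, (e = 1 ∨ e = -1) → α 1 = α 0 + e →
      ∀ m : ℕ, α ((m : ℕ) : Fin n) = α 0 + ((m : ℕ) : Fin n) * e := by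
    intro e he h1 m
    have key : ∀ m : ℕ, α ((m : ℕ) : Fin n) = α 0 + ((m : ℕ) : Fin n) * e ∧
        α (((m+1 : ℕ)) : Fin n) = α 0 + (((m+1:ℕ)) : Fin n) * e := by
      intro m
      induction m with
      | zero => refine ⟨by simp, ?_⟩; push_cast; rw [one_mul]; exact h1
      | succ m ih =>
        refine ⟨ih.2, ?_⟩
        show α (((m+2:ℕ)) : Fin n) = α 0 + (((m+2:ℕ)) : Fin n) * e
        have hadj : (cycleGraph n).Adj (((m+1:ℕ)) : Fin n) (((m+2:ℕ)) : Fin n) := by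
          rw [cg_adj hn]; right; push_cast; ring
        have h2 := α.map_rel_iff.2 hadj
        rw [cg_adj hn] at h2
        have hne : (((m+2:ℕ)) : Fin n) ≠ ((m : ℕ) : Fin n) := by
          intro hc
          apply two_ne
          have h4 : ((m:ℕ):Fin n) + ((2:ℕ):Fin n) = ((m:ℕ):Fin n) + 0 := by
            rw [add_zero]
            calc ((m:ℕ):Fin n) + ((2:ℕ):Fin n) = (((m+2:ℕ)):Fin n) := by push_cast; ring
            _ = ((m:ℕ):Fin n) := hc
          exact add_left_cancel h4
        rcases he with rfl | rfl
        · rcases h2 with h2 | h2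
          · exfalso
            have hx : α (((m+2:ℕ)) : Fin n) = α ((m:ℕ) : Fin n) := by
              have hy := eq_sub_of_add_eq h2.symm
              rw [hy, ih.2, ih.1]; push_cast; ring
            exact hne (α.injective hx)
          · rw [h2, ih.2]; push_cast; ring
        · rcases h2 with h2 | h2
          · have hy := eq_sub_of_add_eq h2.symm
            rw [hy, ih.2]; push_cast; ring
          · exfalso
            have hx : α (((m+2:ℕ)) : Fin n) = α ((m:ℕ) : Fin n) := by
              rw [h2, ih.2, ih.1]; push_cast; ring
            exact hne (α.injective hx)
    exact (key m).1
  have h01 : (cycleGraph n).Adj 0 1 := by rw [cg_adj hn]; right; rw [zero_add]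
  have h := α.map_rel_iff.2 h01
  rw [cg_adj hn] at h
  have conv' : ∀ e : Fin n, (e = 1 ∨ e = -1) → α 1 = α 0 + e →
      ∀ i : Fin n, α i = α 0 + i * e := by
    intro e he h1 i
    have := step e he h1 i.val
    rwa [Fin.cast_val_eq_self] at this
  rcases h with h | h
  · exact ⟨-1, Or.inr rfl, conv' _ (Or.inr rfl) (by rw [h]; ring)⟩
  · exact ⟨1, Or.inl rfl, conv' _ (Or.inl rfl) h⟩

private lemma theta_upper [NeZero n] (hn : 3 ≤ n) {k : ℕ} (hk : n / 2 + 2 ≤ k)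
    (c : Fin n → Fin k) (hc : Function.Surjective c) :
    IsDistinguishing (cycleGraph n) c := by
  intro α hpres
  obtain ⟨e, he, hform⟩ := aut_affine hn α
  set b := α 0 with hb
  set fib : Fin k → Finset (Fin n) := fun j => Finset.univ.filter (fun i => c i = j) with hfib
  have hfibne : ∀ j, (fib j).Nonempty := by
    intro j; obtain ⟨i, hi⟩ := hc j; exact ⟨i, by simp [hfib, hi]⟩
  have hcard : n = ∑ j : Fin k, (fib j).card := by
    have := Finset.card_eq_sum_card_fiberwise (f := c) (s := Finset.univ) (t := Finset.univ)
      (fun x _ => Finset.mem_univ _)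
    simpa using this
  have hclosed : ∀ i : Fin n, α i ∈ fib (c i) := by
    intro i; simp [hfib, hpres i]
  rcases he with rfl | rfl
  · by_cases hb0 : b = 0
    · intro v; rw [hform v, hb0, mul_one, zero_add]
    · exfalso
      have h2 : ∀ j, 2 ≤ (fib j).card := by
        intro j
        obtain ⟨i, hi⟩ := hfibne j
        have hi2 : α i ∈ fib j := by
          have := hclosed i
          have hci : c i = j := by simpa [hfib] using hi
          rwa [hci] at this
        have hne : α i ≠ i := by
          rw [hform i, mul_one]; intro hcon
          exact hb0 (by linear_combination hcon)
        calc 2 = ({α i, i} : Finset (Fin n)).card := (Finset.card_pair hne).symm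
        _ ≤ (fib j).card := Finset.card_le_card (by intro x hx; simp at hx; rcases hx with rfl|rfl <;> assumption)
      have hsum2 : ∑ _j : Fin k, 2 ≤ ∑ j : Fin k, (fib j).card :=
        Finset.sum_le_sum (fun j _ => h2 j)
      rw [Finset.sum_const, Finset.card_univ, Fintype.card_fin, smul_eq_mul] at hsum2
      omega
  · exfalso
    have hform' : ∀ i : Fin n, α i = b - i := by
      intro i; rw [hform i]; ring
    set Sol : Finset (Fin n) := Finset.univ.filter (fun i => i + i = b) with hSolDef
    have hSol : Sol.card ≤ 2 := by
      have hsub : Sol ⊆ {⟨b.val / 2, by omega⟩, ⟨(b.val + n) / 2, by have := b.isLt; omega⟩} := by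
        intro x hx
        have hx' : x + x = b := by simpa [hSolDef] using hx
        have hv := congrArg Fin.val hx'
        rw [Fin.val_add] at hv
        have hlt := x.isLt
        have hblt := b.isLt
        rcases Nat.lt_or_ge (x.val + x.val) n with hcase | hcase
        · rw [Nat.mod_eq_of_lt hcase] at hv
          simp only [Finset.mem_insert, Finset.mem_singleton, Fin.ext_iff]
          left; omega
        · rw [Nat.mod_eq_sub_mod hcase, Nat.mod_eq_of_lt (by omega)] at hv
          simp only [Finset.mem_insert, Finset.mem_singleton, Fin.ext_iff]
          right; omega
      calc Sol.card ≤ _ := Finset.card_le_card hsub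
      _ ≤ 2 := Finset.card_insert_le _ _ |>.trans (by simp)
    set s : Finset (Fin k) := Finset.univ.filter (fun j => (fib j).card = 1) with hsDef
    have hcmin : ∀ j : Fin k, c ((fib j).min' (hfibne j)) = j := by
      intro j
      have := Finset.min'_mem (fib j) (hfibne j)
      simpa [hfib] using this
    have hs2 : s.card ≤ 2 := by
      have : s.card ≤ Sol.card := by
        apply Finset.card_le_card_of_injOn (fun j => (fib j).min' (hfibne j))
        · intro j hj
          have hj1 : (fib j).card = 1 := by simpa [hsDef] using hj
          have hxm : (fib j).min' (hfibne j) ∈ fib j := Finset.min'_mem _ _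
          have hαx : α ((fib j).min' (hfibne j)) ∈ fib j := by
            have := hclosed ((fib j).min' (hfibne j))
            rwa [hcmin j] at this
          have hfix : α ((fib j).min' (hfibne j)) = (fib j).min' (hfibne j) :=
            Finset.card_le_one.1 (le_of_eq hj1) _ hαx _ hxm
          have hsub : b - (fib j).min' (hfibne j) = (fib j).min' (hfibne j) := by
            rw [← hform' _, hfix]
          have hsol : (fib j).min' (hfibne j) + (fib j).min' (hfibne j) = b := by
            linear_combination -hsub
          simp only [hSolDef, Finset.mem_filter, Finset.mem_univ, true_and]
          simpa [hSolDef] using hsol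
        · intro j1 _ j2 _ heq
          simp only at heq
          rw [← hcmin j1, ← hcmin j2, heq]
      omega
    have hsum : 2 * k ≤ n + s.card := by
      have hpt : ∀ j : Fin k, 2 ≤ (fib j).card + (if (fib j).card = 1 then 1 else 0) := by
        intro j
        by_cases h1 : (fib j).card = 1
        · simp [h1]
        · have := Finset.card_pos.2 (hfibne j)
          simp only [h1, if_false, add_zero]
          omega
      have : ∑ _j : Fin k, 2 ≤ ∑ j : Fin k, ((fib j).card + (if (fib j).card = 1 then 1 else 0)) :=
        Finset.sum_le_sum (fun j _ => hpt j)
      rw [Finset.sum_add_distrib, Finset.sum_const, Finset.card_univ, Fintype.card_fin,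
        smul_eq_mul] at this
      have hcf : ∑ j : Fin k, (if (fib j).card = 1 then 1 else 0) = s.card := by
        rw [hsDef, Finset.card_filter]
      omega
    omega

private def negIso [NeZero n] (hn : 3 ≤ n) : cycleGraph n ≃g cycleGraph n where
  toEquiv := Equiv.neg (Fin n)
  map_rel_iff' := by
    intro u v
    show (cycleGraph n).Adj (-u) (-v) ↔ _
    rw [cg_adj hn, cg_adj hn]
    constructor
    · rintro (h | h)
      · right; linear_combination h
      · left; linear_combination h
    · rintro (h | h)
      · right; linear_combination h
      · left; linear_combination h

private def lowc (n : ℕ) : Fin n → Fin (n / 2 + 1) :=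
  fun i => ⟨min i.val (n - i.val), by have := i.isLt; omega⟩

private lemma lowc_surj (hn : 3 ≤ n) : Function.Surjective (lowc n) := by
  intro j
  have hj := j.isLt
  refine ⟨⟨j.val, by omega⟩, ?_⟩
  simp only [lowc, Fin.ext_iff]
  show min j.val (n - j.val) = j.val
  omega

private lemma lowc_not_dist [NeZero n] (hn : 3 ≤ n) :
    ¬ IsDistinguishing (cycleGraph n) (lowc n) := by
  intro hdist
  have hval_neg : ∀ i : Fin n, (-i).val = (n - i.val) % n := fun i => rfl
  have hpres : ∀ v : Fin n, lowc n ((negIso hn) v) = lowc n v := by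
    intro v
    show lowc n (-v) = lowc n v
    simp only [lowc, Fin.ext_iff]
    show min (-v).val (n - (-v).val) = min v.val (n - v.val)
    rw [hval_neg]
    have hv := v.isLt
    by_cases h0 : v.val = 0
    · rw [h0]; simp
    · rw [Nat.mod_eq_of_lt (by omega)]; omega
  have h1 := hdist (negIso hn) hpres 1
  have : ((-1 : Fin n)).val = (1 : Fin n).val := by
    rw [show (negIso hn) 1 = -1 from rfl] at h1; rw [h1]
  rw [hval_neg, Fin.val_one'] at this
  have e1 : 1 % n = 1 := Nat.mod_eq_of_lt (by omega)
  rw [e1, Nat.mod_eq_of_lt (by omega)] at this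
  omega

end AuxThetaCycle

theorem theta_cycleGraph (n : ℕ) (hn : 3 ≤ n) :
    theta (cycleGraph n) = n / 2 + 2 := by
  haveI : NeZero n := ⟨by omega⟩
  have hmem : (n/2+2) ∈ {t | ∀ k, t ≤ k → ∀ c : Fin n → Fin k,
      Function.Surjective c → IsDistinguishing (cycleGraph n) c} := by
    intro k hk c hc
    exact theta_upper hn hk c hc
  apply le_antisymm
  · exact Nat.sInf_le hmem
  · apply le_csInf ⟨_, hmem⟩
    intro t ht
    by_contra hlt
    push_neg at hlt
    exact lowc_not_dist hn (ht (n/2+1) (by omega) (lowc n) (lowc_surj hn))
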